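/- arXiv:2305.13428 — 6 statements merged into one kernel-verified Lean document; each statement's English description precedes it below -/
import Mathlib

section
/- Let m ∈ C satisfy b(m,m) = 1. Then for all x, y ∈ C one has 2·b(x,y) + b(x,m)² + b(y,m)² ≥ 2·b(x,m)·b(y,m) + b(x,x) + b(y,y). (This is obtained by applying the reverse Cauchy–Schwarz inequality to the elements x + t·m and y + t·m of C and extracting the leading coefficient of the resulting polynomial inequality in t > 0.) -/
open Filter Topology

/-!
Apply the reverse Cauchy–Schwarz inequality to `s • x + m` and `s • y + m` for `s > 0`. Since
`b m m = 1`, the defect `b(s x + m, s y + m)² - b(s x + m, s x + m) b(s y + m, s y + m)` is `s²`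
times a quadratic polynomial in `s` whose constant term is the difference of the two sides of the
claim; nonnegativity of that polynomial for all `s > 0` forces its constant term to be nonnegative.
-/

lemma nonneg_of_forall_pos_nonneg_quadratic {c₀ c₁ c₂ : ℝ}
    (h : ∀ s : ℝ, 0 < s → 0 ≤ c₀ + s * c₁ + s ^ 2 * c₂) : 0 ≤ c₀ := by
  have hcont : Continuous fun s : ℝ => c₀ + s * c₁ + s ^ 2 * c₂ := by fun_prop
  have hlim : Tendsto (fun s : ℝ => c₀ + s * c₁ + s ^ 2 * c₂) (𝓝[>] 0) (𝓝 c₀) := by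
    simpa using (hcont.tendsto 0).mono_left nhdsWithin_le_nhds
  exact ge_of_tendsto hlim (eventually_nhdsWithin_of_forall h)

lemma sq_sub_mul_smul_add_smul_add {W : Type*} [AddCommGroup W] [Module ℝ W]
    (b : W →ₗ[ℝ] W →ₗ[ℝ] ℝ) (hsymm : ∀ x y : W, b x y = b y x) {m : W} (hmm : b m m = 1)
    (x y : W) (s : ℝ) :
    b (s • x + m) (s • y + m) ^ 2 - b (s • x + m) (s • x + m) * b (s • y + m) (s • y + m) =
      s ^ 2 * ((2 * b x y + b x m ^ 2 + b y m ^ 2 - (2 * b x m * b y m + b x x + b y y))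
        + s * (2 * b x y * (b x m + b y m) - 2 * b x x * b y m - 2 * b y y * b x m)
        + s ^ 2 * (b x y ^ 2 - b x x * b y y)) := by
  simp only [map_add, map_smul, LinearMap.add_apply, LinearMap.smul_apply, smul_eq_mul,
    hsymm m x, hsymm m y, hmm]
  ring

theorem stmt0_general {W : Type*} [AddCommGroup W] [Module ℝ W]
    (b : W →ₗ[ℝ] W →ₗ[ℝ] ℝ) (hsymm : ∀ x y : W, b x y = b y x)
    (C : Set W)
    (hadd : ∀ x ∈ C, ∀ y ∈ C, x + y ∈ C)
    (hsmul : ∀ t : ℝ, 0 < t → ∀ x ∈ C, t • x ∈ C)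
    (hrevCS : ∀ x ∈ C, ∀ y ∈ C, b x x * b y y ≤ (b x y) ^ 2)
    (m : W) (hm : m ∈ C) (hmm : b m m = 1) :
    ∀ x ∈ C, ∀ y ∈ C,
      2 * b x m * b y m + b x x + b y y ≤
        2 * b x y + (b x m) ^ 2 + (b y m) ^ 2 := by
  intro x hx y hy
  suffices 0 ≤ 2 * b x y + b x m ^ 2 + b y m ^ 2 - (2 * b x m * b y m + b x x + b y y) by
    linarith
  apply nonneg_of_forall_pos_nonneg_quadratic
  intro s hs
  have hdefect := hrevCS _ (hadd _ (hsmul s hs x hx) _ hm) _ (hadd _ (hsmul s hs y hy) _ hm)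
  rw [← sub_nonneg, sq_sub_mul_smul_add_smul_add b hsymm hmm] at hdefect
  exact nonneg_of_mul_nonneg_right hdefect (by positivity)

/-- Let `W` be a real vector space, `b` a symmetric bilinear form on `W`, and `C ⊆ W` a
nonempty subset closed under addition and under scalar multiplication by positive reals,
on which `b` is nonnegative and satisfies the reverse Cauchy–Schwarz inequality
`b x x * b y y ≤ (b x y)^2`.  If `m ∈ C` satisfies `b m m = 1`, then for all `x, y ∈ C`,
`2·b(x,y) + b(x,m)² + b(y,m)² ≥ 2·b(x,m)·b(y,m) + b(x,x) + b(y,y)`. -/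
theorem stmt0 {W : Type*} [AddCommGroup W] [Module ℝ W]
    (b : W →ₗ[ℝ] W →ₗ[ℝ] ℝ) (hsymm : ∀ x y : W, b x y = b y x)
    (C : Set W) (hne : C.Nonempty)
    (hadd : ∀ x ∈ C, ∀ y ∈ C, x + y ∈ C)
    (hsmul : ∀ t : ℝ, 0 < t → ∀ x ∈ C, t • x ∈ C)
    (hnonneg : ∀ x ∈ C, ∀ y ∈ C, 0 ≤ b x y)
    (hrevCS : ∀ x ∈ C, ∀ y ∈ C, b x x * b y y ≤ (b x y) ^ 2)
    (m : W) (hm : m ∈ C) (hmm : b m m = 1) :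
    ∀ x ∈ C, ∀ y ∈ C,
      2 * b x m * b y m + b x x + b y y ≤
        2 * b x y + (b x m) ^ 2 + (b y m) ^ 2 :=
  stmt0_general b hsymm C hadd hsmul hrevCS m hm hmm
end

section
/- Let m ∈ C satisfy b(m,m) > 0, and define the symmetric bilinear form ρ_m(v,w) := b(v,m)·b(w,m) − b(m,m)·b(v,w). Then ρ_m is positive semidefinite on the subspace C − C of W; explicitly, for all x, y ∈ C one has (b(x,m) − b(y,m))² − b(m,m)·(b(x,x) − 2·b(x,y) + b(y,y)) ≥ 0. -/
/-!
Apply the reverse Cauchy–Schwarz inequality to the pair `x + t • m`, `y + t • m` of `C`, for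
every `t > 0`. The defect `b(x+tm, y+tm)² - b(x+tm, x+tm) b(y+tm, y+tm)` is a quadratic in `t`
whose leading coefficient is `ρ_m(x - y, x - y)`; a quadratic that is nonnegative for all large
`t` has a nonnegative leading coefficient.
-/

open Filter Topology

lemma nonneg_of_forall_pos_quadratic_nonneg {a b c : ℝ}
    (h : ∀ t : ℝ, 0 < t → 0 ≤ a * t ^ 2 + b * t + c) : 0 ≤ a := by
  have hlim : Tendsto (fun t : ℝ => a + b * t⁻¹ + c * t⁻¹ ^ 2) atTop (𝓝 a) := by
    have hinv := tendsto_inv_atTop_zero (𝕜 := ℝ)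
    simpa using ((hinv.const_mul b).const_add a).add ((hinv.pow 2).const_mul c)
  refine ge_of_tendsto hlim ((eventually_gt_atTop 0).mono fun t ht => ?_)
  have hdiv : a + b * t⁻¹ + c * t⁻¹ ^ 2 = (a * t ^ 2 + b * t + c) / t ^ 2 := by
    field_simp
  rw [hdiv]
  exact div_nonneg (h t ht) (by positivity)

section SymmetricBilinear

variable {W : Type*} [AddCommGroup W] [Module ℝ W] (b : W →ₗ[ℝ] W →ₗ[ℝ] ℝ)

lemma apply_sub_sub_eq (hsymm : ∀ x y : W, b x y = b y x) (x y : W) :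
    b (x - y) (x - y) = b x x - 2 * b x y + b y y := by
  simp only [map_sub, LinearMap.sub_apply, hsymm y x]
  ring

lemma sq_apply_add_smul_sub_mul (hsymm : ∀ x y : W, b x y = b y x) (x y m : W) (t : ℝ) :
    b (x + t • m) (y + t • m) ^ 2
        - b (x + t • m) (x + t • m) * b (y + t • m) (y + t • m) =
      ((b x m - b y m) ^ 2 - b m m * b (x - y) (x - y)) * t ^ 2
        + 2 * (b x y * (b x m + b y m) - b x x * b y m - b y y * b x m) * t
        + (b x y ^ 2 - b x x * b y y) := by
  rw [apply_sub_sub_eq b hsymm]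
  simp only [map_add, map_smul, LinearMap.add_apply, LinearMap.smul_apply, smul_eq_mul,
    hsymm m x, hsymm m y]
  ring

end SymmetricBilinear

theorem stmt1_general {W : Type*} [AddCommGroup W] [Module ℝ W]
    (b : W →ₗ[ℝ] W →ₗ[ℝ] ℝ) (hsymm : ∀ x y : W, b x y = b y x)
    (C : Set W)
    (hadd : ∀ x ∈ C, ∀ y ∈ C, x + y ∈ C)
    (hsmul : ∀ t : ℝ, 0 < t → ∀ x ∈ C, t • x ∈ C)
    (hrevCS : ∀ x ∈ C, ∀ y ∈ C, b x x * b y y ≤ (b x y) ^ 2)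
    (m : W) (hm : m ∈ C)
    (ρ : W → W → ℝ) (hρ : ∀ v w : W, ρ v w = b v m * b w m - b m m * b v w) :
    ∀ x ∈ C, ∀ y ∈ C,
      0 ≤ (b x m - b y m) ^ 2 - b m m * (b x x - 2 * b x y + b y y) ∧
      0 ≤ ρ (x - y) (x - y) := by
  intro x hx y hy
  have hρxy : ρ (x - y) (x - y) = (b x m - b y m) ^ 2 - b m m * b (x - y) (x - y) := by
    simp only [hρ, map_sub, LinearMap.sub_apply]
    ring
  have hleading : 0 ≤ (b x m - b y m) ^ 2 - b m m * b (x - y) (x - y) := by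
    have hdefect : ∀ t : ℝ, 0 < t → 0 ≤ b (x + t • m) (y + t • m) ^ 2 -
        b (x + t • m) (x + t • m) * b (y + t • m) (y + t • m) := fun t ht =>
      sub_nonneg.2 (hrevCS _ (hadd x hx _ (hsmul t ht m hm)) _ (hadd y hy _ (hsmul t ht m hm)))
    exact nonneg_of_forall_pos_quadratic_nonneg fun t ht =>
      (hdefect t ht).trans_eq (sq_apply_add_smul_sub_mul b hsymm x y m t)
  exact ⟨by rwa [apply_sub_sub_eq b hsymm] at hleading, by rwa [hρxy]⟩

/-- Let `W` be a real vector space, `b` a symmetric bilinear form on `W`, and `C ⊆ W` a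
nonempty subset closed under addition and under scalar multiplication by positive reals,
on which `b` is nonnegative and satisfies the reverse Cauchy–Schwarz inequality.
If `m ∈ C` satisfies `b m m > 0`, then the symmetric bilinear form
`ρ_m(v,w) := b(v,m)·b(w,m) − b(m,m)·b(v,w)` is positive semidefinite on `C − C`;
explicitly, for all `x, y ∈ C`,
`(b(x,m) − b(y,m))² − b(m,m)·(b(x,x) − 2·b(x,y) + b(y,y)) ≥ 0`. -/
theorem stmt1 {W : Type*} [AddCommGroup W] [Module ℝ W]
    (b : W →ₗ[ℝ] W →ₗ[ℝ] ℝ) (hsymm : ∀ x y : W, b x y = b y x)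
    (C : Set W) (hne : C.Nonempty)
    (hadd : ∀ x ∈ C, ∀ y ∈ C, x + y ∈ C)
    (hsmul : ∀ t : ℝ, 0 < t → ∀ x ∈ C, t • x ∈ C)
    (hnonneg : ∀ x ∈ C, ∀ y ∈ C, 0 ≤ b x y)
    (hrevCS : ∀ x ∈ C, ∀ y ∈ C, b x x * b y y ≤ (b x y) ^ 2)
    (m : W) (hm : m ∈ C) (hmm : 0 < b m m)
    (ρ : W → W → ℝ) (hρ : ∀ v w : W, ρ v w = b v m * b w m - b m m * b v w) :
    ∀ x ∈ C, ∀ y ∈ C,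
      0 ≤ (b x m - b y m) ^ 2 - b m m * (b x x - 2 * b x y + b y y) ∧
      0 ≤ ρ (x - y) (x - y) :=
  stmt1_general b hsymm C hadd hsmul hrevCS m hm ρ hρ
end

section
/- Assume in addition that b(x,x) > 0 for every x ∈ C, and define β(x,y) := b(x,y)/√(b(x,x)·b(y,y)) for x, y ∈ C. Then β is a kernel of hyperbolic type on C: β is symmetric, nonnegative, β(x,x) = 1 for all x ∈ C, and for every n ≥ 1, every choice of points x₀, x₁, …, x_n ∈ C and every choice of reals c₁, …, c_n, one has ∑_{i,j=1}^n c_i c_j β(x_i, x_j) ≤ (∑_{k=1}^n c_k β(x_k, x₀))². -/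
/-!
Applying the reverse Cauchy–Schwarz inequality to `e + ε p` and `e + ε q` for `p, q, e ∈ C` with
`b (p - q) e = 0` and dividing by `ε²` gives `(b e e + 2ε b p e) · b (p - q) (p - q) ≤ O(ε²)`,
so `b (p - q) (p - q) ≤ 0`. Every vector of `span C` is such a difference `p - q`, so
subtracting from `v ∈ span C` its `b`-projection onto `e` yields `b v v · b e e ≤ (b v e)²`
on `span C`: `b` is Lorentzian there. After normalising `x ↦ x / √(b x x)`, `β` is `b` on unit
vectors, and the hyperbolic-type inequality is this bound for `v = ∑ cᵢ xᵢ / √(b xᵢ xᵢ)` and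
`e = x₀ / √(b x₀ x₀)`.
-/

section

open Filter Topology Submodule

variable {W : Type*} [AddCommGroup W] [Module ℝ W]

theorem exists_mem_sub_eq_of_mem_span {C : Set W} {e : W} (he : e ∈ C)
    (hadd : ∀ x ∈ C, ∀ y ∈ C, x + y ∈ C) (hsmul : ∀ t : ℝ, 0 < t → ∀ x ∈ C, t • x ∈ C)
    {v : W} (hv : v ∈ span ℝ C) : ∃ p ∈ C, ∃ q ∈ C, v = p - q := by
  induction hv using span_induction with
  | mem x hx => exact ⟨x + e, hadd x hx e he, e, he, by abel⟩
  | zero => exact ⟨e, he, e, he, (sub_self e).symm⟩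
  | add _ _ _ _ h h' =>
    obtain ⟨p, hp, q, hq, rfl⟩ := h
    obtain ⟨p', hp', q', hq', rfl⟩ := h'
    exact ⟨p + p', hadd p hp p' hp', q + q', hadd q hq q' hq', by abel⟩
  | smul t _ _ h =>
    obtain ⟨p, hp, q, hq, rfl⟩ := h
    rcases lt_trichotomy t 0 with ht | rfl | ht
    · refine ⟨(-t) • q, hsmul _ (neg_pos.2 ht) q hq, (-t) • p, hsmul _ (neg_pos.2 ht) p hp, ?_⟩
      simp only [smul_sub, neg_smul]; abel
    · exact ⟨e, he, e, he, by simp⟩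
    · exact ⟨t • p, hsmul t ht p hp, t • q, hsmul t ht q hq, smul_sub t p q⟩

theorem mul_nonpos_of_forall_pos_add_mul_add_sq_nonpos {Z A D K : ℝ}
    (h : ∀ ε > 0, (Z + 2 * ε * A) * D + ε ^ 2 * K ≤ 0) : Z * D ≤ 0 := by
  have hlim : Tendsto (fun ε : ℝ => (Z + 2 * ε * A) * D + ε ^ 2 * K) (𝓝[>] 0) (𝓝 (Z * D)) := by
    have := (show Continuous fun ε : ℝ => (Z + 2 * ε * A) * D + ε ^ 2 * K by fun_prop).tendsto 0
    simpa using this.mono_left nhdsWithin_le_nhds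
  exact le_of_tendsto hlim (eventually_nhdsWithin_of_forall h)

variable (b : W →ₗ[ℝ] W →ₗ[ℝ] ℝ)

theorem apply_sub_self_nonpos_of_apply_sub_eq_zero {C : Set W}
    (hsymm : ∀ x y : W, b x y = b y x)
    (hadd : ∀ x ∈ C, ∀ y ∈ C, x + y ∈ C) (hsmul : ∀ t : ℝ, 0 < t → ∀ x ∈ C, t • x ∈ C)
    (hrevCS : ∀ x ∈ C, ∀ y ∈ C, b x x * b y y ≤ (b x y) ^ 2)
    {p q e : W} (hp : p ∈ C) (hq : q ∈ C) (he : e ∈ C) (he' : 0 < b e e)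
    (horth : b (p - q) e = 0) : b (p - q) (p - q) ≤ 0 := by
  have hA : b q e = b p e := by
    rw [map_sub, LinearMap.sub_apply, sub_eq_zero] at horth
    exact horth.symm
  have hexp : b (p - q) (p - q) = b p p + b q q - 2 * b p q := by
    simp only [map_sub, LinearMap.sub_apply, hsymm q p]; ring
  suffices b e e * b (p - q) (p - q) ≤ 0 from nonpos_of_mul_nonpos_right this he'
  rw [hexp]
  refine mul_nonpos_of_forall_pos_add_mul_add_sq_nonpos (A := b p e)
    (K := b p p * b q q - b p q ^ 2) fun ε hε => ?_
  have hcs := hrevCS _ (hadd e he _ (hsmul ε hε p hp)) _ (hadd e he _ (hsmul ε hε q hq))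
  simp only [map_add, map_smul, LinearMap.add_apply, LinearMap.smul_apply, smul_eq_mul,
    hsymm e p, hsymm e q, hA] at hcs
  refine nonpos_of_mul_nonpos_right (a := ε ^ 2) ?_ (by positivity)
  linear_combination hcs

theorem apply_self_mul_apply_self_le_sq_of_mem_span {C : Set W}
    (hsymm : ∀ x y : W, b x y = b y x)
    (hadd : ∀ x ∈ C, ∀ y ∈ C, x + y ∈ C) (hsmul : ∀ t : ℝ, 0 < t → ∀ x ∈ C, t • x ∈ C)
    (hrevCS : ∀ x ∈ C, ∀ y ∈ C, b x x * b y y ≤ (b x y) ^ 2)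
    {v e : W} (hv : v ∈ span ℝ C) (he : e ∈ C) (he' : 0 < b e e) :
    b v v * b e e ≤ (b v e) ^ 2 := by
  set w := v - (b v e / b e e) • e
  have hw : w ∈ span ℝ C := sub_mem hv (smul_mem _ _ (subset_span he))
  have horth : b w e = 0 := by
    simp only [w, map_sub, map_smul, LinearMap.sub_apply, LinearMap.smul_apply, smul_eq_mul]
    field_simp
    ring
  have hww : b w w * b e e = b v v * b e e - b v e ^ 2 := by
    simp only [w, map_sub, map_smul, LinearMap.sub_apply, LinearMap.smul_apply, smul_eq_mul,
      hsymm e v]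
    field_simp
    ring
  obtain ⟨p, hp, q, hq, hpq⟩ := exists_mem_sub_eq_of_mem_span he hadd hsmul hw
  rw [hpq] at horth hww
  have := apply_sub_self_nonpos_of_apply_sub_eq_zero b hsymm hadd hsmul hrevCS hp hq he he' horth
  linarith [mul_nonpos_of_nonpos_of_nonneg this he'.le]

theorem div_sqrt_mul_eq_apply_inv_sqrt_smul {x y : W} (hx : 0 ≤ b x x) :
    b x y / √(b x x * b y y) = b ((√(b x x))⁻¹ • x) ((√(b y y))⁻¹ • y) := by
  simp only [map_smul, LinearMap.smul_apply, smul_eq_mul, Real.sqrt_mul hx]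
  field_simp

theorem apply_inv_sqrt_smul_self {x : W} (hx : 0 < b x x) :
    b ((√(b x x))⁻¹ • x) ((√(b x x))⁻¹ • x) = 1 := by
  rw [← div_sqrt_mul_eq_apply_inv_sqrt_smul b hx.le, Real.sqrt_mul_self hx.le, div_self hx.ne']

end

theorem stmt2_general {W : Type*} [AddCommGroup W] [Module ℝ W]
    (b : W →ₗ[ℝ] W →ₗ[ℝ] ℝ) (hsymm : ∀ x y : W, b x y = b y x)
    (C : Set W)
    (hadd : ∀ x ∈ C, ∀ y ∈ C, x + y ∈ C)
    (hsmul : ∀ t : ℝ, 0 < t → ∀ x ∈ C, t • x ∈ C)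
    (hnonneg : ∀ x ∈ C, ∀ y ∈ C, 0 ≤ b x y)
    (hrevCS : ∀ x ∈ C, ∀ y ∈ C, b x x * b y y ≤ (b x y) ^ 2)
    (hpos : ∀ x ∈ C, 0 < b x x)
    (β : W → W → ℝ)
    (hβ : ∀ x y : W, β x y = b x y / Real.sqrt (b x x * b y y)) :
    (∀ x ∈ C, ∀ y ∈ C, β x y = β y x) ∧
    (∀ x ∈ C, ∀ y ∈ C, 0 ≤ β x y) ∧
    (∀ x ∈ C, β x x = 1) ∧
    (∀ n : ℕ, 1 ≤ n → ∀ x₀ : W, x₀ ∈ C → ∀ x : Fin n → W, (∀ i, x i ∈ C) →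
      ∀ c : Fin n → ℝ,
        ∑ i, ∑ j, c i * c j * β (x i) (x j) ≤ (∑ k, c k * β (x k) x₀) ^ 2) := by
  set u : W → W := fun x => (√(b x x))⁻¹ • x
  have hu_mem : ∀ x ∈ C, u x ∈ C := fun x hx =>
    hsmul _ (inv_pos.2 (Real.sqrt_pos.2 (hpos x hx))) x hx
  have hβu : ∀ x ∈ C, ∀ y, β x y = b (u x) (u y) := fun x hx y =>
    (hβ x y).trans (div_sqrt_mul_eq_apply_inv_sqrt_smul b (hpos x hx).le)
  have hu_self : ∀ x ∈ C, b (u x) (u x) = 1 := fun x hx => apply_inv_sqrt_smul_self b (hpos x hx)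
  refine ⟨fun x _ y _ => by rw [hβ, hβ, hsymm, mul_comm],
    fun x hx y hy => by rw [hβu x hx]; exact hnonneg _ (hu_mem x hx) _ (hu_mem y hy),
    fun x hx => by rw [hβu x hx, hu_self x hx], ?_⟩
  intro n _ x₀ hx₀ x hx c
  set v := ∑ i, c i • u (x i)
  have hv : v ∈ Submodule.span ℝ C :=
    Submodule.sum_mem _ fun i _ => Submodule.smul_mem _ _ (Submodule.subset_span (hu_mem _ (hx i)))
  have hlhs : ∑ i, ∑ j, c i * c j * β (x i) (x j) = b v v := by
    simp only [v, hβu _ (hx _), map_sum, map_smul, LinearMap.sum_apply, LinearMap.smul_apply,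
      smul_eq_mul, Finset.mul_sum]
    refine Finset.sum_congr rfl fun i _ => Finset.sum_congr rfl fun j _ => ?_
    rw [hsymm]
    ring
  have hrhs : ∑ k, c k * β (x k) x₀ = b v (u x₀) := by
    simp only [v, hβu _ (hx _), map_sum, map_smul, LinearMap.sum_apply, LinearMap.smul_apply,
      smul_eq_mul]
  rw [hlhs, hrhs]
  have := apply_self_mul_apply_self_le_sq_of_mem_span b hsymm hadd hsmul hrevCS hv
    (hu_mem x₀ hx₀) (by rw [hu_self x₀ hx₀]; exact one_pos)
  rwa [hu_self x₀ hx₀, mul_one] at this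

/-- Let `W` be a real vector space, `b` a symmetric bilinear form on `W`, and `C ⊆ W` a
nonempty subset closed under addition and under scalar multiplication by positive reals,
on which `b` is nonnegative and satisfies the reverse Cauchy–Schwarz inequality, and assume
moreover `b x x > 0` for every `x ∈ C`.  Define `β(x,y) := b(x,y)/√(b(x,x)·b(y,y))`.
Then `β` is a kernel of hyperbolic type on `C`: it is symmetric, nonnegative, equal to `1`
on the diagonal, and for every `n ≥ 1`, all points `x₀, x₁, …, x_n ∈ C` and all reals
`c₁, …, c_n`, one has `∑_{i,j} c_i c_j β(x_i,x_j) ≤ (∑_k c_k β(x_k,x₀))²`. -/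
theorem stmt2 {W : Type*} [AddCommGroup W] [Module ℝ W]
    (b : W →ₗ[ℝ] W →ₗ[ℝ] ℝ) (hsymm : ∀ x y : W, b x y = b y x)
    (C : Set W) (hne : C.Nonempty)
    (hadd : ∀ x ∈ C, ∀ y ∈ C, x + y ∈ C)
    (hsmul : ∀ t : ℝ, 0 < t → ∀ x ∈ C, t • x ∈ C)
    (hnonneg : ∀ x ∈ C, ∀ y ∈ C, 0 ≤ b x y)
    (hrevCS : ∀ x ∈ C, ∀ y ∈ C, b x x * b y y ≤ (b x y) ^ 2)
    (hpos : ∀ x ∈ C, 0 < b x x)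
    (β : W → W → ℝ)
    (hβ : ∀ x y : W, β x y = b x y / Real.sqrt (b x x * b y y)) :
    (∀ x ∈ C, ∀ y ∈ C, β x y = β y x) ∧
    (∀ x ∈ C, ∀ y ∈ C, 0 ≤ β x y) ∧
    (∀ x ∈ C, β x x = 1) ∧
    (∀ n : ℕ, 1 ≤ n → ∀ x₀ : W, x₀ ∈ C → ∀ x : Fin n → W, (∀ i, x i ∈ C) →
      ∀ c : Fin n → ℝ,
        ∑ i, ∑ j, c i * c j * β (x i) (x j) ≤ (∑ k, c k * β (x k) x₀) ^ 2) :=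
  stmt2_general b hsymm C hadd hsmul hnonneg hrevCS hpos β hβ
end

section
/- For every real a ≥ 1 and every t ∈ [0,1], set s := √(t² + (1−t)² + 2t(1−t)a). Then for all real u, v ≥ 0 satisfying cosh u = (t·a + (1−t))/s and cosh v = ((1−t)·a + t)/s, one has cosh(u + v) = a. -/
/-!
Write `Q = t² + (1-t)² + 2t(1-t)a = s²`. Then `sinh² u = t²(a²-1)/Q` and
`sinh² v = (1-t)²(a²-1)/Q`; since `u, v ≥ 0` and `t(1-t) ≥ 0` this forces
`sinh u sinh v = t(1-t)(a²-1)/Q`, and the addition formula gives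
`cosh (u+v) = ((ta+1-t)((1-t)a+t) + t(1-t)(a²-1))/Q = aQ/Q = a`.
-/

open Real

lemma Real.sinh_mul_sinh_eq_of_sq_eq {u v c : ℝ} (hu : 0 ≤ u) (hv : 0 ≤ v) (hc : 0 ≤ c)
    (h : sinh u ^ 2 * sinh v ^ 2 = c ^ 2) : sinh u * sinh v = c :=
  (pow_left_inj₀ (mul_nonneg (sinh_nonneg_iff.mpr hu) (sinh_nonneg_iff.mpr hv)) hc
    two_ne_zero).mp (by rw [mul_pow, h])

theorem stmt3_general (a : ℝ) (t : ℝ) (ht : t ∈ Set.Icc (0 : ℝ) 1)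
    (s : ℝ) (hs : s = Real.sqrt (t ^ 2 + (1 - t) ^ 2 + 2 * t * (1 - t) * a))
    (u v : ℝ) (hu : 0 ≤ u) (hv : 0 ≤ v)
    (hcu : Real.cosh u = (t * a + (1 - t)) / s)
    (hcv : Real.cosh v = ((1 - t) * a + t) / s) :
    Real.cosh (u + v) = a := by
  obtain ⟨ht0, ht1⟩ := ht
  have hs_pos : 0 < s := by
    refine lt_of_le_of_ne (hs ▸ sqrt_nonneg _) fun h ↦ (cosh_pos u).ne' ?_
    rw [hcu, ← h, div_zero]
  have hs_sq : s ^ 2 = t ^ 2 + (1 - t) ^ 2 + 2 * t * (1 - t) * a :=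
    hs ▸ sq_sqrt (sqrt_pos.mp (hs ▸ hs_pos)).le
  have hsu_sq : sinh u ^ 2 = t ^ 2 * (a ^ 2 - 1) / s ^ 2 := by
    rw [sinh_sq, hcu]
    field_simp
    linear_combination -hs_sq
  have hsv_sq : sinh v ^ 2 = (1 - t) ^ 2 * (a ^ 2 - 1) / s ^ 2 := by
    rw [sinh_sq, hcv]
    field_simp
    linear_combination -hs_sq
  have hc_nonneg : 0 ≤ t * (1 - t) * (a ^ 2 - 1) / s ^ 2 := by
    have hconv : t * (1 - t) * (a ^ 2 - 1) / s ^ 2 = (1 - t) * sinh u ^ 2 + t * sinh v ^ 2 := by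
      rw [hsu_sq, hsv_sq]; ring
    have ht1' : 0 ≤ 1 - t := sub_nonneg.mpr ht1
    rw [hconv]
    positivity
  have hsinh : sinh u * sinh v = t * (1 - t) * (a ^ 2 - 1) / s ^ 2 :=
    sinh_mul_sinh_eq_of_sq_eq hu hv hc_nonneg (by rw [hsu_sq, hsv_sq]; ring)
  rw [cosh_add, hsinh, hcu, hcv]
  field_simp
  linear_combination -a * hs_sq

/-- For `a ≥ 1`, `t ∈ [0,1]` and `s := √(t² + (1−t)² + 2t(1−t)a)`, if `u, v ≥ 0` satisfy
`cosh u = (t·a + (1−t))/s` and `cosh v = ((1−t)·a + t)/s`, then `cosh (u + v) = a`. -/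
theorem stmt3 (a : ℝ) (ha : 1 ≤ a) (t : ℝ) (ht : t ∈ Set.Icc (0 : ℝ) 1)
    (s : ℝ) (hs : s = Real.sqrt (t ^ 2 + (1 - t) ^ 2 + 2 * t * (1 - t) * a))
    (u v : ℝ) (hu : 0 ≤ u) (hv : 0 ≤ v)
    (hcu : Real.cosh u = (t * a + (1 - t)) / s)
    (hcv : Real.cosh v = ((1 - t) * a + t) / s) :
    Real.cosh (u + v) = a :=
  stmt3_general a t ht s hs u v hu hv hcu hcv
end

section
/- Let (a_i)_{i≥1} and (b_i)_{i≥1} be sequences of strictly positive real numbers. For n ≥ 2 put S_n^a := ∑_{i=1}^n a_i, S_n^b := ∑_{i=1}^n b_i, E_n^a := ∑_{1≤i<j≤n} a_i a_j, and E_n^b := ∑_{1≤i<j≤n} b_i b_j. Assume (∑_{i=1}^n a_i²)/(S_n^a)² → 0 and (∑_{i=1}^n b_i²)/(S_n^b)² → 0 as n → ∞. Then (S_n^a · S_n^b − ∑_{i=1}^n a_i b_i)/(2·√(E_n^a · E_n^b)) → 1 as n → ∞. -/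
open Filter Topology Finset

/-!
Write `S_a = ∑ aᵢ`, `Q_a = ∑ aᵢ² / S_a²` and `P = ∑ aᵢbᵢ / (S_a S_b)`.
Since `2 E_a = S_a² (1 - Q_a)`, the ratio equals `(1 - P) / √((1 - Q_a)(1 - Q_b))`, and
Cauchy–Schwarz gives `P² ≤ Q_a Q_b`, so `P → 0` together with `Q_a, Q_b → 0` and the ratio
tends to `1`.
-/

theorem two_mul_sum_Icc_sum_Ico_mul {R : Type*} [CommRing R] (a : ℕ → R) (n : ℕ) :
    2 * ∑ j ∈ Icc 1 n, ∑ i ∈ Ico 1 j, a i * a j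
      = (∑ i ∈ Icc 1 n, a i) ^ 2 - ∑ i ∈ Icc 1 n, a i ^ 2 := by
  induction n with
  | zero => simp
  | succ n ih =>
    have hnot : n + 1 ∉ Ico 1 (n + 1) := by simp
    rw [← Ico_insert_right (by omega), sum_insert hnot, sum_insert hnot, sum_insert hnot,
      Ico_add_one_right_eq_Icc, ← sum_mul]
    linear_combination ih

theorem sum_Icc_sum_Ico_mul_eq {K : Type*} [Field K] [CharZero K] (a : ℕ → K) (n : ℕ)
    (hS : ∑ i ∈ Icc 1 n, a i ≠ 0) :
    ∑ j ∈ Icc 1 n, ∑ i ∈ Ico 1 j, a i * a j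
      = (∑ i ∈ Icc 1 n, a i) ^ 2
        * (1 - (∑ i ∈ Icc 1 n, a i ^ 2) / (∑ i ∈ Icc 1 n, a i) ^ 2) / 2 := by
  have h := two_mul_sum_Icc_sum_Ico_mul a n
  field_simp
  linear_combination h

theorem sq_sum_mul_div_le_mul {ι : Type*} (s : Finset ι) (a b : ι → ℝ) :
    ((∑ i ∈ s, a i * b i) / ((∑ i ∈ s, a i) * ∑ i ∈ s, b i)) ^ 2
      ≤ (∑ i ∈ s, a i ^ 2) / (∑ i ∈ s, a i) ^ 2
        * ((∑ i ∈ s, b i ^ 2) / (∑ i ∈ s, b i) ^ 2) := by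
  rw [div_pow, div_mul_div_comm, mul_pow]
  exact div_le_div_of_nonneg_right (sum_mul_sq_le_sq_mul_sq s a b) (by positivity)

theorem tendsto_sum_mul_div_of_tendsto_sum_sq_div {α ι : Type*} {l : Filter α}
    (s : α → Finset ι) (a b : ι → ℝ)
    (hA : Tendsto (fun n => (∑ i ∈ s n, a i ^ 2) / (∑ i ∈ s n, a i) ^ 2) l (𝓝 0))
    (hB : Tendsto (fun n => (∑ i ∈ s n, b i ^ 2) / (∑ i ∈ s n, b i) ^ 2) l (𝓝 0)) :
    Tendsto (fun n => (∑ i ∈ s n, a i * b i) / ((∑ i ∈ s n, a i) * ∑ i ∈ s n, b i))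
      l (𝓝 0) := by
  have hbound : Tendsto (fun n => √((∑ i ∈ s n, a i ^ 2) / (∑ i ∈ s n, a i) ^ 2 *
      ((∑ i ∈ s n, b i ^ 2) / (∑ i ∈ s n, b i) ^ 2))) l (𝓝 0) := by
    simpa using (hA.mul hB).sqrt
  exact squeeze_zero_norm (fun n => Real.abs_le_sqrt (sq_sum_mul_div_le_mul (s n) a b)) hbound

theorem div_two_mul_sqrt_eq (Sa Sb Pab Qa Qb : ℝ) (hSab : 0 < Sa * Sb) :
    (Sa * Sb - Pab) / (2 * √(Sa ^ 2 * (1 - Qa) / 2 * (Sb ^ 2 * (1 - Qb) / 2)))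
      = (1 - Pab / (Sa * Sb)) / √((1 - Qa) * (1 - Qb)) := by
  rw [show Sa ^ 2 * (1 - Qa) / 2 * (Sb ^ 2 * (1 - Qb) / 2)
      = (Sa * Sb / 2) ^ 2 * ((1 - Qa) * (1 - Qb)) by ring,
    Real.sqrt_mul (sq_nonneg _), Real.sqrt_sq (by positivity), one_sub_div hSab.ne', div_div]
  ring

/-- Let `(a_i)_{i≥1}`, `(b_i)_{i≥1}` be strictly positive reals with
`S_n^a := ∑_{i=1}^n a_i`, `S_n^b := ∑_{i=1}^n b_i`, `E_n^a := ∑_{1≤i<j≤n} a_i a_j`,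
`E_n^b := ∑_{1≤i<j≤n} b_i b_j`.  If `(∑_{i=1}^n a_i²)/(S_n^a)² → 0` and
`(∑_{i=1}^n b_i²)/(S_n^b)² → 0`, then
`(S_n^a·S_n^b − ∑_{i=1}^n a_i b_i)/(2·√(E_n^a·E_n^b)) → 1`. -/
theorem stmt8 (a b : ℕ → ℝ) (ha : ∀ i, 0 < a i) (hb : ∀ i, 0 < b i)
    (hA : Tendsto (fun n : ℕ =>
        (∑ i ∈ Finset.Icc 1 n, (a i) ^ 2) / (∑ i ∈ Finset.Icc 1 n, a i) ^ 2)
      atTop (nhds 0))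
    (hB : Tendsto (fun n : ℕ =>
        (∑ i ∈ Finset.Icc 1 n, (b i) ^ 2) / (∑ i ∈ Finset.Icc 1 n, b i) ^ 2)
      atTop (nhds 0)) :
    Tendsto (fun n : ℕ =>
        ((∑ i ∈ Finset.Icc 1 n, a i) * (∑ i ∈ Finset.Icc 1 n, b i)
            - ∑ i ∈ Finset.Icc 1 n, a i * b i) /
          (2 * Real.sqrt ((∑ j ∈ Finset.Icc 1 n, ∑ i ∈ Finset.Ico 1 j, a i * a j) *
              (∑ j ∈ Finset.Icc 1 n, ∑ i ∈ Finset.Ico 1 j, b i * b j))))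
      atTop (nhds 1) := by
  have hP := tendsto_sum_mul_div_of_tendsto_sum_sq_div (fun n => Icc 1 n) a b hA hB
  have hlim := ((tendsto_const_nhds (x := (1 : ℝ))).sub hP).div
    (((tendsto_const_nhds (x := (1 : ℝ))).sub hA).mul
      ((tendsto_const_nhds (x := (1 : ℝ))).sub hB)).sqrt (by simp)
  simp only [sub_zero, mul_one, Real.sqrt_one, div_one, Pi.div_def] at hlim
  refine hlim.congr' ?_
  filter_upwards [eventually_ge_atTop 1] with n hn
  have hSa : 0 < ∑ i ∈ Icc 1 n, a i := sum_pos (fun i _ => ha i) (nonempty_Icc.2 hn)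
  have hSb : 0 < ∑ i ∈ Icc 1 n, b i := sum_pos (fun i _ => hb i) (nonempty_Icc.2 hn)
  rw [sum_Icc_sum_Ico_mul_eq a n hSa.ne', sum_Icc_sum_Ico_mul_eq b n hSb.ne',
    div_two_mul_sqrt_eq _ _ _ _ _ (mul_pos hSa hSb)]
end

section
/- Define κ_m := π^{m/2}/Γ(m/2 + 1) for integers m (possibly negative), where Γ is the Gamma function. Then lim_{n→∞} (2nπ·κ_{n−3})/(κ_{n−2}·(n−1)·√(2πn)) = 1. -/
/-!
Log-convexity of `Γ` between `x` and `x + 1` gives Gautschi's inequality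
`x / √(x + 1/2) ≤ Γ(x + 1/2) / Γ(x) ≤ √x`, hence `Γ(x + 1/2) / Γ(x) ~ √x`. The quotient of the
statement is `√(2n)/(n - 1) · Γ(x + 1/2)/Γ(x)` with `x = (n - 1)/2`, and `√(2n)/(n - 1) · √x → 1`.
-/

open Filter

/-- `κ m = π^{m/2}/Γ(m/2 + 1)`, defined for all integers `m` (possibly negative). -/
noncomputable def kappa (m : ℤ) : ℝ :=
  Real.pi ^ ((m : ℝ) / 2) / Real.Gamma ((m : ℝ) / 2 + 1)

open Real Topology

namespace Real

theorem Gamma_add_half_le_sqrt_mul_Gamma {x : ℝ} (hx : 0 < x) :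
    Gamma (x + 1 / 2) ≤ √x * Gamma x := by
  have hΓ : 0 ≤ Gamma x := (Gamma_pos_of_pos hx).le
  calc Gamma (x + 1 / 2) = Gamma (1 / 2 * x + 1 / 2 * (x + 1)) := by ring_nf
    _ ≤ Gamma x ^ (1 / 2 : ℝ) * Gamma (x + 1) ^ (1 / 2 : ℝ) :=
      Gamma_mul_add_mul_le_rpow_Gamma_mul_rpow_Gamma hx (by positivity) one_half_pos
        one_half_pos (add_halves 1)
    _ = √x * Gamma x := by
      rw [← sqrt_eq_rpow, ← sqrt_eq_rpow, Gamma_add_one hx.ne', sqrt_mul hx.le, mul_left_comm,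
        mul_self_sqrt hΓ]

theorem mul_Gamma_le_sqrt_mul_Gamma_add_half {x : ℝ} (hx : 0 < x) :
    x * Gamma x ≤ √(x + 1 / 2) * Gamma (x + 1 / 2) := by
  have h := Gamma_add_half_le_sqrt_mul_Gamma (by positivity : 0 < x + 1 / 2)
  rwa [add_assoc, add_halves, Gamma_add_one hx.ne'] at h

theorem tendsto_Gamma_add_half_div_Gamma_mul_sqrt :
    Tendsto (fun x => Gamma (x + 1 / 2) / (Gamma x * √x)) atTop (𝓝 1) := by
  have hlower : Tendsto (fun x : ℝ => √(x / (x + 1 / 2))) atTop (𝓝 1) := by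
    have h : Tendsto (fun x : ℝ => 1 - 1 / 2 / (x + 1 / 2)) atTop (𝓝 1) := by
      simpa using tendsto_const_nhds.sub
        (tendsto_const_nhds.div_atTop (tendsto_atTop_add_const_right _ (1 / 2 : ℝ) tendsto_id))
    have h' : Tendsto (fun x : ℝ => x / (x + 1 / 2)) atTop (𝓝 1) := by
      refine h.congr' ?_
      filter_upwards [eventually_gt_atTop 0] with x hx
      field_simp
      ring
    simpa using h'.sqrt
  refine tendsto_of_tendsto_of_tendsto_of_le_of_le' hlower tendsto_const_nhds ?_ ?_
  · filter_upwards [eventually_gt_atTop 0] with x hx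
    rw [le_div_iff₀ (by positivity), sqrt_div hx.le, div_mul_eq_mul_div,
      div_le_iff₀ (by positivity), mul_left_comm, mul_self_sqrt hx.le, mul_comm,
      mul_comm (Gamma _)]
    exact mul_Gamma_le_sqrt_mul_Gamma_add_half hx
  · filter_upwards [eventually_gt_atTop 0] with x hx
    rw [div_le_one (by positivity), mul_comm]
    exact Gamma_add_half_le_sqrt_mul_Gamma hx

end Real

theorem kappa_sub_one_div_kappa (m : ℤ) :
    kappa (m - 1) / kappa m = Gamma (m / 2 + 1) / (√π * Gamma (m / 2 + 1 / 2)) := by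
  unfold kappa
  push_cast
  rw [show ((m : ℝ) - 1) / 2 + 1 = m / 2 + 1 / 2 by ring,
    show ((m : ℝ) - 1) / 2 = m / 2 - 1 / 2 by ring, rpow_sub pi_pos, ← sqrt_eq_rpow,
    div_div (π ^ ((m : ℝ) / 2)), div_div_div_cancel_left' _ _ (rpow_pos_of_pos pi_pos _).ne']

theorem kappa_quotient_eq_Gamma_ratio_mul_sqrt {n : ℕ} (hn : 1 < n) :
    (2 * n * π * kappa ((n : ℤ) - 3)) / (kappa ((n : ℤ) - 2) * ((n : ℝ) - 1) * √(2 * π * n)) =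
      Gamma (((n : ℝ) - 1) / 2 + 1 / 2) / (Gamma (((n : ℝ) - 1) / 2) * √(((n : ℝ) - 1) / 2)) *
        √(n / (n - 1)) := by
  have hk : kappa ((n : ℤ) - 3) / kappa ((n : ℤ) - 2) =
      Gamma (((n : ℝ) - 1) / 2 + 1 / 2) / (√π * Gamma (((n : ℝ) - 1) / 2)) := by
    rw [show (n : ℤ) - 3 = (n : ℤ) - 2 - 1 by ring, kappa_sub_one_div_kappa]
    push_cast
    ring_nf
  rw [show (2 * n * π * kappa ((n : ℤ) - 3)) / (kappa ((n : ℤ) - 2) * ((n : ℝ) - 1) * √(2 * π * n))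
      = 2 * n * π / ((n - 1) * √(2 * π * n)) * (kappa ((n : ℤ) - 3) / kappa ((n : ℤ) - 2)) by
    rw [div_mul_div_comm]; ring_nf, hk]
  have h1 : (0 : ℝ) < n - 1 := sub_pos.mpr (by exact_mod_cast hn)
  have hG : Gamma (((n : ℝ) - 1) / 2) ≠ 0 := (Gamma_pos_of_pos (div_pos h1 two_pos)).ne'
  rw [sqrt_div h1.le, sqrt_div (by positivity), sqrt_mul (by positivity), sqrt_mul (by positivity)]
  field_simp
  rw [sq_sqrt h1.le, sq_sqrt zero_le_two, sq_sqrt pi_pos.le, sq_sqrt n.cast_nonneg]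
  ring

/-- `(2nπ·κ_{n−3})/(κ_{n−2}·(n−1)·√(2πn)) → 1` as `n → ∞`. -/
theorem stmt11 :
    Tendsto (fun n : ℕ =>
        (2 * n * Real.pi * kappa ((n : ℤ) - 3)) /
          (kappa ((n : ℤ) - 2) * ((n : ℝ) - 1) * Real.sqrt (2 * Real.pi * n)))
      atTop (nhds 1) := by
  have hx : Tendsto (fun n : ℕ => ((n : ℝ) - 1) / 2) atTop atTop :=
    (tendsto_atTop_add_const_right _ (-1) tendsto_natCast_atTop_atTop).atTop_div_const two_pos
  have hsqrt : Tendsto (fun n : ℕ => √(n / (n - 1 : ℝ))) atTop (𝓝 1) := by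
    simpa [← sub_eq_add_neg] using (tendsto_natCast_div_add_atTop (-1 : ℝ)).sqrt
  have h := (tendsto_Gamma_add_half_div_Gamma_mul_sqrt.comp hx).mul hsqrt
  rw [one_mul] at h
  refine h.congr' ?_
  filter_upwards [eventually_gt_atTop 1] with n hn
  exact (kappa_quotient_eq_Gamma_ratio_mul_sqrt hn).symm
end
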